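/- arXiv:2402.14847 — 2 statements merged into one kernel-verified Lean document; each statement's English description precedes it below -/
import Mathlib

section
/- Lower bound via splitting: for any position k of a designated job l in an optimal schedule, the optimal total tardiness of J equals the optimal total tardiness of the set of jobs preceding l, plus max(0, Σ_{j preceding} p_j + p_l − d_l), plus the optimal total tardiness (with start time shifted by Σ_{j preceding} p_j + p_l) of the jobs following l, where the minimum is taken over the sets of preceding jobs of size k−1; in particular the optimal objective is at most this quantity for every choice of the partition. -/
/-- Total tardiness of a list of jobs processed consecutively (no idle time)
starting at time `t`. -/
def totalTardFrom {n : ℕ} (p d : Fin n → ℤ) : ℤ → List (Fin n) → ℤ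
  | _, [] => 0
  | t, j :: L => max 0 (t + p j - d j) + totalTardFrom p d (t + p j) L

/-- Optimal total tardiness of the job set `A` when processing starts at
time `t` (minimum over all orderings of `A`). -/
noncomputable def optTard {n : ℕ} (p d : Fin n → ℤ) (A : Finset (Fin n)) (t : ℤ) : ℤ :=
  sInf {x : ℤ | ∃ L : List (Fin n), L.Nodup ∧ L.toFinset = A ∧ totalTardFrom p d t L = x}

/-!
Concatenate an optimal ordering of `A`, the job `l`, and an optimal ordering of `B` started at
the completion time of `l`: this ordering of all jobs has exactly the right-hand side as its
total tardiness, and the optimum is no larger.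
-/

section Tardiness

variable {n : ℕ} (p d : Fin n → ℤ)

theorem totalTardFrom_nonneg (t : ℤ) (L : List (Fin n)) : 0 ≤ totalTardFrom p d t L := by
  induction L generalizing t with
  | nil => exact le_rfl
  | cons j L ih => exact add_nonneg (le_max_left _ _) (ih _)

theorem totalTardFrom_append (t : ℤ) (L₁ L₂ : List (Fin n)) :
    totalTardFrom p d t (L₁ ++ L₂)
      = totalTardFrom p d t L₁ + totalTardFrom p d (t + (L₁.map p).sum) L₂ := by
  induction L₁ generalizing t with
  | nil => simp [totalTardFrom]
  | cons j L₁ ih =>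
    simp only [List.cons_append, totalTardFrom, ih, List.map_cons, List.sum_cons, add_assoc]

theorem bddBelow_totalTardFrom (A : Finset (Fin n)) (t : ℤ) :
    BddBelow
      {x : ℤ | ∃ L : List (Fin n), L.Nodup ∧ L.toFinset = A ∧ totalTardFrom p d t L = x} :=
  ⟨0, by rintro _ ⟨L, -, -, rfl⟩; exact totalTardFrom_nonneg p d t L⟩

theorem optTard_le_totalTardFrom {A : Finset (Fin n)} {t : ℤ} {L : List (Fin n)}
    (hL : L.Nodup) (hLA : L.toFinset = A) : optTard p d A t ≤ totalTardFrom p d t L :=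
  csInf_le (bddBelow_totalTardFrom p d A t) ⟨L, hL, hLA, rfl⟩

theorem exists_totalTardFrom_eq_optTard (A : Finset (Fin n)) (t : ℤ) :
    ∃ L : List (Fin n),
      L.Nodup ∧ L.toFinset = A ∧ totalTardFrom p d t L = optTard p d A t := by
  refine Int.csInf_mem ?_ (bddBelow_totalTardFrom p d A t)
  exact ⟨_, A.toList, A.nodup_toList, A.toList_toFinset, rfl⟩

end Tardiness

theorem optTard_le_split_general (n : ℕ) (p d : Fin n → ℤ)
    (l : Fin n) (A B : Finset (Fin n))
    (hdisj : Disjoint A B) (hpart : A ∪ B = Finset.univ \ {l}) :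
    optTard p d Finset.univ 0
      ≤ optTard p d A 0 + max 0 ((∑ j ∈ A, p j) + p l - d l)
          + optTard p d B ((∑ j ∈ A, p j) + p l) := by
  obtain ⟨LA, hLA, hA, hoptA⟩ := exists_totalTardFrom_eq_optTard p d A 0
  obtain ⟨LB, hLB, rfl, hoptB⟩ :=
    exists_totalTardFrom_eq_optTard p d B ((∑ j ∈ A, p j) + p l)
  subst hA
  have hl : l ∉ LA ∧ l ∉ LB := by
    simpa [or_imp] using Finset.ext_iff.1 hpart l
  have hnodup : (LA ++ l :: LB).Nodup :=
    List.nodup_append'.2 ⟨hLA, List.nodup_cons.2 ⟨hl.2, hLB⟩,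
      List.disjoint_cons_right.2 ⟨hl.1, List.disjoint_toFinset_iff_disjoint.1 hdisj⟩⟩
  have huniv : (LA ++ l :: LB).toFinset = Finset.univ := by
    rw [List.toFinset_append, List.toFinset_cons, Finset.union_insert, hpart,
      Finset.sdiff_singleton_eq_erase, Finset.insert_erase (Finset.mem_univ l)]
  calc optTard p d Finset.univ 0 ≤ totalTardFrom p d 0 (LA ++ l :: LB) :=
        optTard_le_totalTardFrom p d hnodup huniv
    _ = _ := by
        rw [totalTardFrom_append, ← List.sum_toFinset p hLA, ← hoptA, ← hoptB]
        simp only [totalTardFrom, zero_add]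
        ring

/-- Lower bound via splitting: for any job `l` and any partition of
the remaining jobs into a set `A` scheduled before `l` and a set `B` scheduled
after `l`, the optimal total tardiness of all jobs is at most the optimal
tardiness of `A` started at 0, plus the tardiness of `l` completing at
`t_A + p l`, plus the optimal tardiness of `B` started at `t_A + p l`,
where `t_A = ∑_{j ∈ A} p j`. -/
theorem optTard_le_split (n : ℕ) (p d : Fin n → ℤ)
    (hp : ∀ j, 0 < p j) (hd : ∀ j, 0 ≤ d j)
    (l : Fin n) (A B : Finset (Fin n))
    (hdisj : Disjoint A B) (hpart : A ∪ B = Finset.univ \ {l}) :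
    optTard p d Finset.univ 0
      ≤ optTard p d A 0 + max 0 ((∑ j ∈ A, p j) + p l - d l)
          + optTard p d B ((∑ j ∈ A, p j) + p l) :=
  optTard_le_split_general n p d l A B hdisj hpart
end

section
/- Lawler's decomposition theorem: if jobs are indexed in EDD order and l is a job of maximal processing time, then there exists an integer k with l ≤ k ≤ n and an optimal sequence in which l is preceded exactly by all jobs j with j ≤ k (j ≠ l) and followed by all jobs j with j > k. -/
/-- Total tardiness of permutation `π` (job at position `k` is `π k`, no idle
time, start at 0). -/
def totalTard {n : ℕ} (p d : Fin n → ℤ) (π : Equiv.Perm (Fin n)) : ℤ :=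
  ∑ k : Fin n,
    max 0 ((∑ k' ∈ Finset.univ.filter (fun k' => k' ≤ k), p (π k')) - d (π k))

/-!
Among the optimal schedules take one, `A ++ l :: C`, in which the longest job `l` is as late
as possible. Exchanging `l` with a later job `j` does not increase the tardiness when
`d j ≤ d l` or when `j` is due before `l` completes (here `p j ≤ p l` is used), and it moves
`l` later; hence every job of `C` is due after `l` and not before `l` completes. Let `S` be the
jobs of smaller index than every job of `C`; by the EDD order `l ∈ S`. Moving the jobs of `A`
outside `S` to just after `l` keeps the schedule optimal, since each of them is due no earlier
than some job of `C` and therefore still finishes on time. The new schedule begins with exactly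
the jobs of `S`, an initial segment of indices, and `l` comes last among them.
-/

open Equiv (Perm)

section

variable {n : ℕ}

lemma Equiv.Perm.exists_ofFn_eq {σ : Perm (Fin n)} {L : List (Fin n)}
    (h : L.Perm (List.ofFn σ)) :
    ∃ π : Perm (Fin n), List.ofFn π = L := by
  have hlen : L.length = n := by simpa using h.length_eq
  have hinj : Function.Injective fun k : Fin n => L[(k : ℕ)] := fun a b hab =>
    Fin.ext ((h.nodup_iff.2 (List.nodup_ofFn.2 σ.injective)).getElem_inj_iff.1 hab)
  refine ⟨Equiv.ofBijective _ (Finite.injective_iff_bijective.1 hinj), ?_⟩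
  exact List.ext_getElem (by simp [hlen]) fun i _ _ => by simp

lemma Equiv.Perm.val_symm_apply_of_ofFn_eq {π : Perm (Fin n)} {X Y : List (Fin n)} {a : Fin n}
    (h : List.ofFn π = X ++ a :: Y) : (π.symm a : ℕ) = X.length := by
  have hX : X.length < n := by simpa using (congrArg List.length h).ge.trans_lt' (by simp)
  have : π ⟨X.length, hX⟩ = a := by
    have := List.getElem_ofFn (f := π) (i := X.length) (by simpa using hX)
    simp_all
  simp [← this]

lemma Equiv.Perm.le_symm_apply_iff_of_ofFn_eq {π : Perm (Fin n)} {X Y : List (Fin n)}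
    {a : Fin n} (h : List.ofFn π = X ++ a :: Y) {q : Fin n → Prop} (hX : ∀ x ∈ X, q x)
    (ha : q a) (hY : ∀ y ∈ Y, ¬ q y) (m : Fin n) : m ≤ π.symm a ↔ q (π m) := by
  have hlen : X.length + (Y.length + 1) = n := by simpa using (congrArg List.length h).symm
  have hm : π m = (X ++ a :: Y)[(m : ℕ)]'(by simp [← h]) := by simp [← h]
  rw [Fin.le_def, Perm.val_symm_apply_of_ofFn_eq h]
  rcases lt_trichotomy (m : ℕ) X.length with hlt | heq | hgt
  · rw [hm, List.getElem_append_left hlt]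
    exact iff_of_true hlt.le (hX _ (List.getElem_mem _))
  · simp [hm, heq, ha]
  · rw [hm, List.getElem_append_right (by omega), List.getElem_cons (by simp; omega),
      dif_neg (by omega)]
    exact iff_of_false (by omega) (hY _ (List.getElem_mem _))

lemma Fin.mem_iff_val_lt_card {s : Finset (Fin n)} (hs : IsLowerSet (s : Set (Fin n)))
    (x : Fin n) : x ∈ s ↔ (x : ℕ) < s.card := by
  constructor
  · intro hx
    have := Finset.card_le_card fun y hy => hs (Finset.mem_Iic.1 hy) hx
    rwa [Fin.card_Iic] at this
  · intro hx
    by_contra hxs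
    have := Finset.card_le_card fun y hy =>
      Finset.mem_Iio.2 (lt_of_not_ge fun hxy => hxs (hs hxy hy))
    rw [Fin.card_Iio] at this
    omega

lemma Equiv.Perm.le_iff_apply_le_of_isLowerSet {π : Perm (Fin n)} {k : Fin n}
    {s : Finset (Fin n)} (hs : IsLowerSet (s : Set (Fin n))) (hk : ∀ m, m ≤ k ↔ π m ∈ s)
    (m : Fin n) : m ≤ k ↔ π m ≤ k := by
  have hs_eq : s = (Finset.Iic k).map π.toEmbedding := by
    ext x
    simp [hk]
  have hcard : s.card = k + 1 := by rw [hs_eq, Finset.card_map, Fin.card_Iic]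
  rw [hk, Fin.mem_iff_val_lt_card hs, hcard, Nat.lt_succ_iff, Fin.le_def]

end

lemma List.sum_map_nonneg {ι : Type*} {f : ι → ℤ} (hf : ∀ i, 0 ≤ f i) (L : List ι) :
    0 ≤ (L.map f).sum :=
  List.sum_nonneg (by simpa using fun i _ => hf i)

namespace Tardiness

variable {α : Type*} (p d : α → ℤ)

def tardFrom (t : ℤ) : List α → ℤ
  | [] => 0
  | a :: L => max 0 (t + p a - d a) + tardFrom (t + p a) L

variable {p d}

@[simp] lemma tardFrom_nil (t : ℤ) : tardFrom p d t [] = 0 := rfl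

@[simp] lemma tardFrom_cons (t : ℤ) (a : α) (L : List α) :
    tardFrom p d t (a :: L) = max 0 (t + p a - d a) + tardFrom p d (t + p a) L := rfl

lemma tardFrom_append (t : ℤ) (A B : List α) :
    tardFrom p d t (A ++ B) = tardFrom p d t A + tardFrom p d (t + (A.map p).sum) B := by
  induction A generalizing t with
  | nil => simp
  | cons a A ih => simp [ih, add_assoc]

lemma tardFrom_mono {t t' : ℤ} (h : t ≤ t') (L : List α) :
    tardFrom p d t L ≤ tardFrom p d t' L := by
  induction L generalizing t t' with
  | nil => simp
  | cons a L ih => exact add_le_add (max_le_max le_rfl (by omega)) (ih (by omega))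

lemma tardFrom_filter_le (hp : ∀ a, 0 ≤ p a) (q : α → Bool) (t : ℤ) (L : List α) :
    tardFrom p d t (L.filter q) ≤ tardFrom p d t L := by
  induction L generalizing t with
  | nil => simp
  | cons a L ih =>
    by_cases hq : q a
    · simpa [List.filter_cons_of_pos hq] using ih (t + p a)
    · rw [List.filter_cons_of_neg hq, tardFrom_cons]
      have hmono : tardFrom p d t (L.filter q) ≤ tardFrom p d (t + p a) (L.filter q) :=
        tardFrom_mono (by linarith [hp a]) _
      linarith [ih (t + p a), le_max_left 0 (t + p a - d a)]

lemma tardFrom_eq_zero (hp : ∀ a, 0 ≤ p a) {t : ℤ} {L : List α}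
    (h : ∀ a ∈ L, t + (L.map p).sum ≤ d a) : tardFrom p d t L = 0 := by
  induction L generalizing t with
  | nil => rfl
  | cons a L ih =>
    have hL := List.sum_map_nonneg hp L
    simp only [List.map_cons, List.sum_cons, List.mem_cons, forall_eq_or_imp] at h
    rw [tardFrom_cons, ih fun b hb => by linarith [h.2 b hb], max_eq_left (by linarith [h.1])]
    simp

lemma tardFrom_swap_le (hp : ∀ a, 0 ≤ p a) {t : ℤ} {j l : α} (B C : List α)
    (hpj : p j ≤ p l) (hd : d j ≤ d l ∨ d j < t + p l) :
    tardFrom p d t (j :: (B ++ l :: C)) ≤ tardFrom p d t (l :: (B ++ j :: C)) := by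
  have hB := tardFrom_mono (p := p) (d := d) (show t + p j ≤ t + p l by omega) B
  have hC : tardFrom p d (t + p j + (B.map p).sum + p l) C =
      tardFrom p d (t + p l + (B.map p).sum + p j) C := by
    congr 1; ring
  have hS := List.sum_map_nonneg hp B
  have hj := hp j
  have key : max 0 (t + p j - d j) + max 0 (t + p j + (B.map p).sum + p l - d l) ≤
      max 0 (t + p l - d l) + max 0 (t + p l + (B.map p).sum + p j - d j) := by
    rcases hd with hd | hd <;>
    · simp only [max_def]
      split_ifs <;> omega
  simp only [tardFrom_cons, tardFrom_append]
  linarith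

lemma tardFrom_filter_cons_le (hp : ∀ a, 0 ≤ p a) (q : α → Bool) {t : ℤ} {l : α}
    {A C : List α} (hA : ∀ i ∈ A, q i = false → t + (A.map p).sum + p l ≤ d i) :
    tardFrom p d t (A.filter q ++ l :: (A.filter (fun i => !q i) ++ C)) ≤
      tardFrom p d t (A ++ l :: C) := by
  set X := A.filter q
  set Y := A.filter (fun i => !q i)
  have hsum : (X.map p).sum + (Y.map p).sum = (A.map p).sum := by
    rw [← List.sum_append, ← List.map_append]
    exact ((List.filter_append_perm q A).map p).sum_eq
  have hX := tardFrom_filter_le (d := d) hp q t A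
  have hY : tardFrom p d (t + (X.map p).sum + p l) Y = 0 := by
    refine tardFrom_eq_zero hp fun i hi => ?_
    have ⟨hiA, hqi⟩ := List.mem_filter.1 hi
    linarith [hA i hiA (by simpa using hqi)]
  have hl : max 0 (t + (X.map p).sum + p l - d l) ≤ max 0 (t + (A.map p).sum + p l - d l) :=
    max_le_max le_rfl (by linarith [List.sum_map_nonneg hp Y])
  have hC : t + (X.map p).sum + p l + (Y.map p).sum = t + (A.map p).sum + p l := by linarith
  simp only [tardFrom_append, tardFrom_cons, hY, hC]
  linarith

lemma tardFrom_ofFn {m : ℕ} (f : Fin m → α) (t : ℤ) :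
    tardFrom p d t (List.ofFn f) =
      ∑ k : Fin m, max 0 (t + ∑ k' ∈ Finset.univ.filter (· ≤ k), p (f k') - d (f k)) := by
  induction m generalizing t with
  | zero => simp
  | succ m ih =>
    rw [List.ofFn_succ, tardFrom_cons, ih, Fin.sum_univ_succ]
    congr 1
    · simp [Finset.filter_eq']
    · refine Finset.sum_congr rfl fun k _ => ?_
      rw [Finset.sum_filter, Finset.sum_filter, Fin.sum_univ_succ]
      simp [Fin.succ_le_succ_iff, add_assoc]

variable {n : ℕ}

lemma totalTard_eq_tardFrom (p d : Fin n → ℤ) (π : Perm (Fin n)) :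
    totalTard p d π = tardFrom p d 0 (List.ofFn π) := by
  simp [tardFrom_ofFn, totalTard]

def IsOptimal (p d : Fin n → ℤ) (σ : Perm (Fin n)) : Prop :=
  ∀ τ : Perm (Fin n), totalTard p d σ ≤ totalTard p d τ

lemma exists_isOptimal_forall_le (p d : Fin n → ℤ) (f : Perm (Fin n) → ℕ) :
    ∃ σ, IsOptimal p d σ ∧ ∀ τ, IsOptimal p d τ → f τ ≤ f σ := by
  classical
  obtain ⟨σ₀, -, hσ₀⟩ :=
    Finset.univ.exists_min_image (totalTard p d) Finset.univ_nonempty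
  obtain ⟨σ, hσ, hmax⟩ := (Finset.univ.filter (IsOptimal p d)).exists_max_image f
    ⟨σ₀, Finset.mem_filter.2 ⟨Finset.mem_univ _, fun τ => hσ₀ τ (Finset.mem_univ _)⟩⟩
  exact ⟨σ, (Finset.mem_filter.1 hσ).2, fun τ hτ => hmax τ (by simpa using hτ)⟩

lemma IsOptimal.exists_ofFn_eq {p d : Fin n → ℤ} {σ : Perm (Fin n)} (hσ : IsOptimal p d σ)
    {L : List (Fin n)} (hL : L.Perm (List.ofFn σ))
    (h : tardFrom p d 0 L ≤ tardFrom p d 0 (List.ofFn σ)) :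
    ∃ π, IsOptimal p d π ∧ List.ofFn π = L := by
  obtain ⟨π, rfl⟩ := Perm.exists_ofFn_eq hL
  refine ⟨π, fun τ => ?_, rfl⟩
  rw [totalTard_eq_tardFrom]
  exact h.trans ((totalTard_eq_tardFrom p d σ).symm.trans_le (hσ τ))

/-- If `j` were due earlier, exchanging it with `l` would give an optimal schedule with `l`
later. -/
lemma IsOptimal.due_of_mem_after {p d : Fin n → ℤ} (hp : ∀ j, 0 ≤ p j) {l : Fin n}
    (hl : ∀ i, p i ≤ p l) {σ : Perm (Fin n)} (hσ : IsOptimal p d σ)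
    (hlast : ∀ τ, IsOptimal p d τ → (τ.symm l : ℕ) ≤ σ.symm l) {A C : List (Fin n)}
    (hAC : List.ofFn σ = A ++ l :: C) {j : Fin n} (hj : j ∈ C) :
    d l < d j ∧ (A.map p).sum + p l ≤ d j := by
  by_contra hcon
  have hd : d j ≤ d l ∨ d j < 0 + (A.map p).sum + p l := by
    rw [not_and_or, not_lt, not_le] at hcon
    simpa [add_assoc] using hcon
  obtain ⟨B, C', rfl⟩ := List.append_of_mem hj
  have hperm : (A ++ j :: (B ++ l :: C')).Perm (List.ofFn σ) := by
    rw [hAC]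
    exact .append_left A <| (List.perm_middle.cons j).trans <|
      (List.Perm.swap l j _).trans (List.perm_middle.symm.cons l)
  obtain ⟨π, hπ, hπL⟩ := hσ.exists_ofFn_eq hperm <| by
    rw [hAC, tardFrom_append, tardFrom_append]
    exact add_le_add le_rfl (tardFrom_swap_le hp B C' (hl j) hd)
  have := hlast π hπ
  rw [Perm.val_symm_apply_of_ofFn_eq (X := A ++ j :: B) (by simpa using hπL),
    Perm.val_symm_apply_of_ofFn_eq hAC] at this
  simp at this

lemma IsOptimal.exists_ofFn_eq_filter_append {p d : Fin n → ℤ} (hp : ∀ j, 0 ≤ p j)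
    (hd : Monotone d) {σ : Perm (Fin n)} (hσ : IsOptimal p d σ) {l : Fin n}
    {A C : List (Fin n)} (hAC : List.ofFn σ = A ++ l :: C)
    (hC : ∀ j ∈ C, (A.map p).sum + p l ≤ d j) :
    ∃ π, IsOptimal p d π ∧ List.ofFn π = A.filter (fun i => ∀ j ∈ C, i < j) ++
      l :: (A.filter (fun i => ¬ ∀ j ∈ C, i < j) ++ C) := by
  simp only [decide_not]
  refine hσ.exists_ofFn_eq ?_ ?_ <;> rw [hAC]
  · exact (List.perm_middle.append_left _).symm.trans <| by
      simpa only [List.append_assoc] using (List.filter_append_perm _ A).append_right (l :: C)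
  · refine tardFrom_filter_cons_le hp _ fun i _ hi => ?_
    obtain ⟨j, hj, hji⟩ : ∃ j ∈ C, j ≤ i := by simpa using hi
    linarith [hC j hj, hd hji]

end Tardiness

open Tardiness

theorem lawler_decomposition_general (n : ℕ) (p d : Fin n → ℤ)
    (hp : ∀ j, 0 < p j)
    (hEDD : Monotone d)
    (l : Fin n) (hl : ∀ i, p i ≤ p l) :
    ∃ k : Fin n, l ≤ k ∧
      ∃ π' : Equiv.Perm (Fin n),
        (∀ σ : Equiv.Perm (Fin n), totalTard p d π' ≤ totalTard p d σ) ∧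
        π' k = l ∧
        (∀ m : Fin n, m ≤ k ↔ π' m ≤ k) := by
  have hp₀ : ∀ j, 0 ≤ p j := fun j => (hp j).le
  obtain ⟨σ, hσ, hlast⟩ := exists_isOptimal_forall_le p d fun τ => (τ.symm l : ℕ)
  obtain ⟨A, C, hAC⟩ :=
    List.append_of_mem (List.mem_ofFn.2 ⟨σ.symm l, σ.apply_symm_apply l⟩)
  have hC : ∀ j ∈ C, d l < d j ∧ (A.map p).sum + p l ≤ d j :=
    fun j hj => hσ.due_of_mem_after hp₀ hl hlast hAC hj
  obtain ⟨π, hπ, hπL⟩ :=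
    hσ.exists_ofFn_eq_filter_append hp₀ hEDD hAC fun j hj => (hC j hj).2
  set S : Finset (Fin n) := Finset.univ.filter fun x => ∀ j ∈ C, x < j
  have hS : IsLowerSet (S : Set (Fin n)) := fun x y hyx hx => by
    simp only [S, Finset.coe_filter, Set.mem_ofPred_eq, Finset.mem_univ, true_and] at hx ⊢
    exact fun j hj => hyx.trans_lt (hx j hj)
  have hlS : l ∈ S := by simpa [S] using fun j hj => hEDD.reflect_lt (hC j hj).1
  have hk := Perm.le_iff_apply_le_of_isLowerSet hS <|
    Perm.le_symm_apply_iff_of_ofFn_eq hπL (q := (· ∈ S)) (by simp [S]) hlS fun y hy hyS => by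
      simp only [S, Finset.mem_filter, Finset.mem_univ, true_and] at hyS
      rcases List.mem_append.1 hy with hy | hy
      · exact absurd hyS (by simpa using (List.mem_filter.1 hy).2)
      · exact lt_irrefl y (hyS y hy)
  exact ⟨π.symm l, by simpa using (hk _).1 le_rfl, π, hπ, by simp, hk⟩

/-- Lawler's decomposition theorem: if jobs are indexed in EDD
order (non-decreasing due dates, ties broken by non-decreasing processing
times) and `l` is a job of maximal processing time, then there exist a position
`k` with `l ≤ k` and an optimal permutation `π*` such that `l` is scheduled at
position `k` and the first `k` positions are occupied exactly by the jobs
`{1,…,k}` (so `l` is preceded exactly by the jobs `j ≤ k`, `j ≠ l`, and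
followed by all jobs `j > k`). -/
theorem lawler_decomposition (n : ℕ) (p d : Fin n → ℤ)
    (hp : ∀ j, 0 < p j) (hd : ∀ j, 0 ≤ d j)
    (hEDD : Monotone d)
    (hties : ∀ i j : Fin n, i ≤ j → d i = d j → p i ≤ p j)
    (l : Fin n) (hl : ∀ i, p i ≤ p l) :
    ∃ k : Fin n, l ≤ k ∧
      ∃ π' : Equiv.Perm (Fin n),
        (∀ σ : Equiv.Perm (Fin n), totalTard p d π' ≤ totalTard p d σ) ∧
        π' k = l ∧
        (∀ m : Fin n, m ≤ k ↔ π' m ≤ k) :=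
  lawler_decomposition_general n p d hp hEDD l hl
end
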